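/- Let a be an even positive integer and b an odd positive integer, let λ = (1+a, 1^b) be the hook partition with arm length a and leg length b, and define α = (1 + a/2, 1^{(b−1)/2}) and β = (a/2, 1^{(b+1)/2}). Then the Littlewood–Richardson coefficient c^λ_{αβ} (counting Littlewood–Richardson tableaux of shape λ/α and content β) is at least 1. -/

import Mathlib

/-- A partition: a weakly decreasing finite sequence (list) of positive
integers. -/
def IsPartition (l : List ℕ) : Prop :=
  l.Pairwise (· ≥ ·) ∧ ∀ x ∈ l, 0 < x

/-- The `i`-th part (0-indexed) of a partition, `0` beyond its length. -/
def part (l : List ℕ) (i : ℕ) : ℕ := l.getD i 0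

/-- Cell `(i, j)` (row `i`, column `j`, both 0-indexed) lies in the skew
Young diagram `ν/λ`. -/
def InSkew (nu lam : List ℕ) (i j : ℕ) : Prop :=
  part lam i ≤ j ∧ j < part nu i

/-- Cell `(i, j)` comes weakly before cell `(r, c)` in the reverse reading
order: rows are read top to bottom, and each row is read right to left. -/
def ReadingLE (i j r c : ℕ) : Prop := i < r ∨ (i = r ∧ c ≤ j)

/-- `T` is a Littlewood–Richardson tableau of shape `ν/λ` and content `μ`:
`λ ⊆ ν`, the entries of `T` are positive exactly on the cells of the skew
diagram `ν/λ`, entries weakly increase from left to right along rows,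
entries strictly increase from top to bottom down columns, for every `j ≥ 1`
the entry `j` occurs exactly `μ_j` times, and the reverse reading word is a
lattice word: every prefix contains at least as many occurrences of `j` as
of `j + 1`, for every `j ≥ 1`. -/
structure IsLRTableau (nu lam mu : List ℕ) (T : ℕ → ℕ → ℕ) : Prop where
  subset : ∀ i, part lam i ≤ part nu i
  support : ∀ i j, 0 < T i j ↔ InSkew nu lam i j
  row_weak : ∀ i j j', InSkew nu lam i j → InSkew nu lam i j' → j ≤ j' →
    T i j ≤ T i j'
  col_strict : ∀ i i' j, InSkew nu lam i j → InSkew nu lam i' j → i < i' →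
    T i j < T i' j
  content : ∀ k : ℕ, {p : ℕ × ℕ | T p.1 p.2 = k + 1}.ncard = part mu k
  lattice : ∀ r c k : ℕ,
    {p : ℕ × ℕ | T p.1 p.2 = k + 2 ∧ ReadingLE p.1 p.2 r c}.ncard ≤
    {p : ℕ × ℕ | T p.1 p.2 = k + 1 ∧ ReadingLE p.1 p.2 r c}.ncard

/-- The Littlewood–Richardson coefficient `c^ν_{λμ}`: the number of
Littlewood–Richardson tableaux of shape `ν/λ` and content `μ`. -/
noncomputable def lrCoeff (nu lam mu : List ℕ) : ℕ :=
  {T : ℕ → ℕ → ℕ | IsLRTableau nu lam mu T}.ncard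

/-- The Newell–Littlewood coefficient
`N^ν_{λμ} = Σ_{α,β,γ} c^λ_{αβ} · c^μ_{αγ} · c^ν_{βγ}`, the sum running over
all triples of partitions `(α, β, γ)` (only finitely many terms are
nonzero). -/
noncomputable def nlCoeff (lam mu nu : List ℕ) : ℕ :=
  ∑ᶠ x : {l : List ℕ // IsPartition l} × {l : List ℕ // IsPartition l} ×
      {l : List ℕ // IsPartition l},
    lrCoeff lam x.1.val x.2.1.val * lrCoeff mu x.1.val x.2.2.val *
      lrCoeff nu x.2.1.val x.2.2.val

/-- The hook partition `(1 + a, 1^b)` with arm length `a` and leg length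
`b`. -/
def hook (a b : ℕ) : List ℕ := (1 + a) :: List.replicate b 1

/-!
The skew hook `(1 + a, 1^b) / α` is a row of `a/2` cells in the first row together with a column
of `(b+1)/2` cells in the first column. Filling the row with `1`s and the column with
`2, 3, 4, …` from top to bottom gives a Littlewood–Richardson tableau of content `β`: its reverse
reading word `1^{a/2} 2 3 4 ⋯` is a lattice word because `a > 0`.

Since `Set.ncard` of an infinite set is `0`, one also needs that there are only finitely many
LR tableaux of a given shape and content: they vanish off the skew diagram and their entries are
bounded by the length of the content.
-/

lemma part_eq_zero_of_length_le {l : List ℕ} {i : ℕ} (h : l.length ≤ i) : part l i = 0 :=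
  List.getD_eq_default _ _ h

lemma part_le_sum (l : List ℕ) (i : ℕ) : part l i ≤ l.sum := by
  rcases lt_or_ge i l.length with h | h
  · rw [part, List.getD_eq_getElem _ _ h]
    exact List.le_sum_of_mem (List.getElem_mem h)
  · rw [part_eq_zero_of_length_le h]
    exact Nat.zero_le _

@[simp] lemma part_cons_zero (x : ℕ) (l : List ℕ) : part (x :: l) 0 = x := rfl

@[simp] lemma part_cons_succ (x : ℕ) (l : List ℕ) (i : ℕ) : part (x :: l) (i + 1) = part l i := rfl

@[simp] lemma part_replicate (n x i : ℕ) : part (List.replicate n x) i = if i < n then x else 0 := by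
  simp only [part, List.getD_eq_getElem?_getD, List.getElem?_replicate]
  split_ifs <;> rfl

lemma InSkew.lt_length_and_lt_sum {nu lam : List ℕ} {i j : ℕ} (h : InSkew nu lam i j) :
    i < nu.length ∧ j < nu.sum := by
  refine ⟨lt_of_not_ge fun hi => ?_, h.2.trans_le (part_le_sum nu i)⟩
  simpa [part_eq_zero_of_length_le hi] using h.2

lemma finite_setOf_inSkew (nu lam : List ℕ) : {p : ℕ × ℕ | InSkew nu lam p.1 p.2}.Finite :=
  ((Set.finite_Iio nu.length).prod (Set.finite_Iio nu.sum)).subset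
    fun _ hp => hp.lt_length_and_lt_sum

namespace IsLRTableau

variable {nu lam mu : List ℕ} {T : ℕ → ℕ → ℕ}

lemma eq_zero_of_not_inSkew (hT : IsLRTableau nu lam mu T) {i j : ℕ}
    (h : ¬ InSkew nu lam i j) : T i j = 0 :=
  Nat.eq_zero_of_not_pos fun hpos => h ((hT.support i j).1 hpos)

lemma le_length (hT : IsLRTableau nu lam mu T) (i j : ℕ) : T i j ≤ mu.length := by
  by_contra! hlt
  have hfin : {p : ℕ × ℕ | T p.1 p.2 = T i j}.Finite :=
    (finite_setOf_inSkew nu lam).subset fun p hp => (hT.support _ _).1 (by simp_all; omega)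
  have hcard := hT.content (T i j - 1)
  rw [Nat.sub_add_cancel (by omega), part_eq_zero_of_length_le (by omega),
    Set.ncard_eq_zero hfin] at hcard
  exact hcard.subset (show (i, j) ∈ {p : ℕ × ℕ | T p.1 p.2 = T i j} from rfl)

end IsLRTableau

lemma finite_setOf_isLRTableau (nu lam mu : List ℕ) : {T | IsLRTableau nu lam mu T}.Finite := by
  let extend : (Fin nu.length → Fin nu.sum → Fin (mu.length + 1)) → ℕ → ℕ → ℕ :=
    fun g i j => if h : i < nu.length ∧ j < nu.sum then g ⟨i, h.1⟩ ⟨j, h.2⟩ else 0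
  refine (Set.finite_range extend).subset fun T hT =>
    ⟨fun i j => ⟨T i j, Nat.lt_succ_of_le (hT.le_length i j)⟩, ?_⟩
  funext i j
  simp only [extend]
  split_ifs with h
  · rfl
  · exact (hT.eq_zero_of_not_inSkew fun hs => h hs.lt_length_and_lt_sum).symm

lemma one_le_lrCoeff {nu lam mu : List ℕ} {T : ℕ → ℕ → ℕ} (hT : IsLRTableau nu lam mu T) :
    1 ≤ lrCoeff nu lam mu :=
  (Set.ncard_pos (finite_setOf_isLRTableau nu lam mu)).2 ⟨T, hT⟩

lemma part_hook_succ (a b i : ℕ) : part (hook a b) (i + 1) = if i < b then 1 else 0 := by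
  simp [hook]

lemma inSkew_hook_hook_iff (a b c d i j : ℕ) :
    InSkew (hook (a + c) (b + d)) (hook a b) i j ↔
      (i = 0 ∧ 1 + a ≤ j ∧ j < 1 + a + c) ∨ (j = 0 ∧ b < i ∧ i ≤ b + d) := by
  rcases i with _ | i
  · simp [InSkew, hook]; omega
  · simp only [InSkew, part_hook_succ, Nat.add_one_ne_zero, false_and, false_or]
    split_ifs <;> omega

def hookTableau (a b c d i j : ℕ) : ℕ :=
  if i = 0 then (if 1 + a ≤ j ∧ j < 1 + a + c then 1 else 0)
  else if j = 0 ∧ b < i ∧ i ≤ b + d then i - b + 1 else 0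

section hookTableau

variable {a b c d i j : ℕ}

lemma hookTableau_pos_iff :
    0 < hookTableau a b c d i j ↔ InSkew (hook (a + c) (b + d)) (hook a b) i j := by
  rw [inSkew_hook_hook_iff]; unfold hookTableau; split_ifs <;> omega

lemma hookTableau_eq_one_iff :
    hookTableau a b c d i j = 1 ↔ i = 0 ∧ 1 + a ≤ j ∧ j < 1 + a + c := by
  unfold hookTableau; split_ifs <;> grind

lemma hookTableau_eq_add_two_iff {k : ℕ} :
    hookTableau a b c d i j = k + 2 ↔ (i, j) = (b + k + 1, 0) ∧ k < d := by
  unfold hookTableau; split_ifs <;> grind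

end hookTableau

lemma Set.ncard_le_ncard_of_subset_singleton {α : Type*} {s t : Set α} {x : α} (hs : s ⊆ {x})
    (ht : t.Finite) (h : s.Nonempty → t.Nonempty) : s.ncard ≤ t.ncard := by
  rcases s.eq_empty_or_nonempty with rfl | hne
  · simp
  calc s.ncard ≤ ({x} : Set α).ncard := Set.ncard_le_ncard hs
    _ = 1 := Set.ncard_singleton x
    _ ≤ t.ncard := (Set.ncard_pos ht).2 (h hne)

lemma isLRTableau_hookTableau {a c : ℕ} (b d : ℕ) (hc : 0 < c) :
    IsLRTableau (hook (a + c) (b + d)) (hook a b) (c :: List.replicate d 1)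
      (hookTableau a b c d) where
  subset i := by
    rcases i with _ | i
    · simp [hook]
    · simp only [part_hook_succ]; split_ifs <;> omega
  support _ _ := hookTableau_pos_iff
  row_weak i j j' hj hj' hjj' := by
    rw [inSkew_hook_hook_iff] at hj hj'
    unfold hookTableau; split_ifs <;> omega
  col_strict i i' j hi hi' hii' := by
    rw [inSkew_hook_hook_iff] at hi hi'
    unfold hookTableau; split_ifs <;> omega
  content k := by
    rcases k with _ | k
    · have hset : {p : ℕ × ℕ | hookTableau a b c d p.1 p.2 = 0 + 1} =
          {0} ×ˢ Set.Ico (1 + a) (1 + a + c) := by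
        ext ⟨i, j⟩
        simp [hookTableau_eq_one_iff]
      rw [hset, Set.ncard_prod, Set.ncard_singleton, Set.ncard_Ico_nat]
      simp
    · have hset : {p : ℕ × ℕ | hookTableau a b c d p.1 p.2 = k + 1 + 1} =
          {p | p = (b + k + 1, 0) ∧ k < d} := by
        ext ⟨i, j⟩
        exact hookTableau_eq_add_two_iff
      rw [hset]
      by_cases hk : k < d <;> simp [hk]
  lattice r c' k := by
    refine Set.ncard_le_ncard_of_subset_singleton (x := (b + k + 1, 0))
      (fun p hp => (hookTableau_eq_add_two_iff.1 hp.1).1)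
      ((finite_setOf_inSkew _ _).subset fun p hp => hookTableau_pos_iff.1 (by rw [hp.1]; omega))
      ?_
    rintro ⟨⟨i, j⟩, hp, hread⟩
    obtain ⟨hij, hk⟩ := hookTableau_eq_add_two_iff.1 hp
    obtain ⟨rfl, rfl⟩ := Prod.mk.inj hij
    rcases k with _ | k
    · exact ⟨(0, 1 + a), hookTableau_eq_one_iff.2 ⟨rfl, le_rfl, by omega⟩,
        Or.inl (by rcases hread with h | h <;> omega)⟩
    · exact ⟨(b + k + 1, 0), hookTableau_eq_add_two_iff.2 ⟨rfl, by omega⟩,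
        Or.inl (by rcases hread with h | h <;> omega)⟩

/-- For the hook `λ = (1+a, 1^b)` with `a` even positive and `b` odd, with
`α = (1 + a/2, 1^{(b−1)/2})` and `β = (a/2, 1^{(b+1)/2})`, one has
`c^λ_{αβ} ≥ 1`. -/
theorem one_le_lrCoeff_hook_even_arm_alpha_beta (a b : ℕ)
    (ha : Even a) (ha' : 0 < a) (hb : Odd b) :
    1 ≤ lrCoeff (hook a b) (hook (a / 2) ((b - 1) / 2))
        (a / 2 :: List.replicate ((b + 1) / 2) 1) := by
  obtain ⟨h, rfl⟩ := ha
  obtain ⟨m, rfl⟩ := hb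
  rw [show (h + h) / 2 = h by omega, show (2 * m + 1 - 1) / 2 = m by omega,
    show (2 * m + 1 + 1) / 2 = m + 1 by omega, show 2 * m + 1 = m + (m + 1) by omega]
  exact one_le_lrCoeff (isLRTableau_hookTableau m (m + 1) (by omega : 0 < h))
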